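/- Let n ≥ 5 be odd, c := cos(π/n)/(1 + cos(π/n)), α := (n−1)π/n, and define the real symmetric (1+n)×(1+n) matrix Z (indexed by 0,1,…,n) by Z_{00} = 1/c, Z_{0j} = Z_{j0} = −1 for j ∈ {1,…,n}, and Z_{jk} = c + (1−c)·cos((j−k)α) for j, k ∈ {1,…,n}. Then the only real symmetric (1+n)×(1+n) matrix M satisfying M_{00} = 0, M_{0i} = M_{ii} for all i ∈ {1,…,n}, M_{ij} = 0 for all distinct i, j ∈ {1,…,n} with i − j ≢ ±1 (mod n), and M·Z = 0, is M = 0. -/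

import Mathlib

/-- The explicit dual optimal solution `Z` of the Lovász theta SDP of the complement `C̄_n` of
the `n`-cycle (rows/columns indexed `0, 1, …, n`): with `c = cos(π/n)/(1 + cos(π/n))` and
`α = (n-1)π/n`, it has `Z 0 0 = 1/c`, `Z 0 j = Z j 0 = -1` for `j ∈ {1, …, n}` and
`Z j k = c + (1 - c)·cos((j - k)α)` for `j, k ∈ {1, …, n}`. -/
noncomputable def antiHoleDualZ (n : ℕ) : Matrix (Fin (n + 1)) (Fin (n + 1)) ℝ :=
  fun i j =>
    if i.val = 0 ∧ j.val = 0 then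
      (1 + Real.cos (Real.pi / n)) / Real.cos (Real.pi / n)
    else if i.val = 0 ∨ j.val = 0 then -1
    else
      Real.cos (Real.pi / n) / (1 + Real.cos (Real.pi / n)) +
        (1 - Real.cos (Real.pi / n) / (1 + Real.cos (Real.pi / n))) *
          Real.cos (((i.val : ℝ) - (j.val : ℝ)) * (((n : ℝ) - 1) * Real.pi / n))

/-!
On the block `{1, …, n}` we have `Z = c·J + (1 - c)(u uᵀ + v vᵀ)` with `u_j = cos(jα)` and
`v_j = sin(jα)`. Column `0` of `M Z = 0` fixes the block row sums of `M` to `M i 0 / c`, and then the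
columns `1` and `2` force `∑ⱼ M i j u_j = ∑ⱼ M i j v_j = 0` for every row `i`. As `n` is odd,
`nα = (n - 1)π ∈ 2πℤ`, so these are cyclic in `j`; a block row being supported on `{p - 1, p, p + 1}`,
the two equations say `a e^{-iα} + b + c' e^{iα} = 0`, i.e. `a = c'` and `b = -2a cos α`.
By symmetry all cycle-edge entries then equal a single `e` and every diagonal entry is
`2e cos(π/n)`, which row `0` (where `M 0 0 = 0`) turns into `n · 2e cos(π/n) = 0`; hence `e = 0`.
-/

open Real Function Matrix

theorem Fintype.sum_eq_add_add {ι M : Type*} [Fintype ι] [DecidableEq ι] [AddCommMonoid M]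
    {f : ι → M} {a b c : ι} (hab : a ≠ b) (hac : a ≠ c) (hbc : b ≠ c)
    (hf : ∀ x, x ≠ a → x ≠ b → x ≠ c → f x = 0) : ∑ x, f x = f a + f b + f c := by
  rw [← Finset.sum_subset (Finset.subset_univ {a, b, c}) fun x _ hx => by
    simp only [Finset.mem_insert, Finset.mem_singleton, not_or] at hx
    exact hf x hx.1 hx.2.1 hx.2.2]
  rw [Finset.sum_insert (by simp [hab, hac]), Finset.sum_pair hbc, add_assoc]

namespace Fin

variable {n : ℕ} [NeZero n]

theorem val_add_one_eq_mod (p : Fin n) : ((p + 1 : Fin n) : ℕ) = (p + 1) % n := by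
  rw [val_add, val_one', Nat.add_mod_mod]

theorem sub_one_ne_self (hn : 2 ≤ n) (p : Fin n) : p - 1 ≠ p := by
  simp only [ne_eq, sub_eq_self, Fin.ext_iff, val_one', val_zero]
  rw [Nat.mod_eq_of_lt hn]
  omega

theorem add_one_ne_self (hn : 2 ≤ n) (p : Fin n) : p + 1 ≠ p := by
  simp only [ne_eq, add_eq_left, Fin.ext_iff, val_one', val_zero]
  rw [Nat.mod_eq_of_lt hn]
  omega

theorem sub_one_ne_add_one (hn : 3 ≤ n) (p : Fin n) : p - 1 ≠ p + 1 := by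
  intro h
  have h2 : p + (1 + 1) = p := by rw [← add_assoc, ← h, sub_add_cancel]
  rw [add_eq_left, Fin.ext_iff, val_add, val_one', Nat.mod_eq_of_lt (by omega : 1 < n),
    Nat.mod_eq_of_lt (by omega : 2 < n)] at h2
  simp at h2

theorem apply_eq_apply_zero_of_forall_apply_add_one {α : Type*} {f : Fin n → α}
    (hf : ∀ p, f (p + 1) = f p) (p : Fin n) : f p = f 0 := by
  open Fin.NatCast in
  have key : ∀ k : ℕ, f k = f 0 := by
    intro k
    induction k with
    | zero => simp
    | succ k ih => rw [Nat.cast_succ, hf, ih]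
  simpa using key p

end Fin

namespace Function.Periodic

variable {β : Type*} {f : ℝ → β} {n : ℕ} [NeZero n]

theorem apply_val_add_one (hf : Periodic f n) (p : Fin n) :
    f ((p + 1 : Fin n) : ℕ) = f ((p : ℕ) + 1) := by
  have h : (((p + 1 : Fin n) : ℕ) : ℝ) + ((p + 1) / n : ℕ) * n = (p : ℕ) + 1 := by
    rw [Fin.val_add_one_eq_mod]
    exact_mod_cast Nat.mod_add_div' _ _
  rw [← h, hf.nat_mul]

theorem apply_val_sub_one (hf : Periodic f n) (p : Fin n) :
    f ((p - 1 : Fin n) : ℕ) = f ((p : ℕ) - 1) := by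
  simpa using ((hf.sub_const 1).apply_val_add_one (p - 1)).symm

end Function.Periodic

theorem eq_of_cos_sin_three_term {a b c φ θ : ℝ} (hθ : sin θ ≠ 0)
    (hcos : a * cos (φ - θ) + b * cos φ + c * cos (φ + θ) = 0)
    (hsin : a * sin (φ - θ) + b * sin φ + c * sin (φ + θ) = 0) :
    a = c ∧ b = -(a + c) * cos θ := by
  rw [cos_sub, cos_add] at hcos
  rw [sin_sub, sin_add] at hsin
  have hpyth := sin_sq_add_cos_sq φ
  have hac : (a - c) * sin θ = 0 := by
    linear_combination sin φ * hcos - cos φ * hsin - (a - c) * sin θ * hpyth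
  refine ⟨by linarith [(mul_eq_zero.mp hac).resolve_right hθ], ?_⟩
  linear_combination cos φ * hcos + sin φ * hsin - (b + (a + c) * cos θ) * hpyth

noncomputable def antiHoleAngle (n : ℕ) : ℝ := ((n : ℝ) - 1) * π / n

noncomputable def antiHoleC (n : ℕ) : ℝ := cos (π / n) / (1 + cos (π / n))

section Angle

variable {n : ℕ}

theorem antiHoleAngle_eq (hn : n ≠ 0) : antiHoleAngle n = π - π / n := by
  unfold antiHoleAngle
  field_simp

theorem cos_antiHoleAngle (hn : n ≠ 0) : cos (antiHoleAngle n) = -cos (π / n) := by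
  rw [antiHoleAngle_eq hn, cos_pi_sub]

theorem sin_antiHoleAngle_pos (hn : 2 ≤ n) : 0 < sin (antiHoleAngle n) := by
  rw [antiHoleAngle_eq (by omega), sin_pi_sub]
  exact sin_pos_of_pos_of_lt_pi (by positivity) (div_lt_self pi_pos (by exact_mod_cast hn))

theorem cos_pi_div_natCast_pos (hn : 3 ≤ n) : 0 < cos (π / n) := by
  have : 0 ≤ π / n := by positivity
  refine cos_pos_of_mem_Ioo ⟨by linarith [pi_pos], ?_⟩
  exact div_lt_div_of_pos_left pi_pos two_pos (by exact_mod_cast hn)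

theorem Function.Periodic.comp_mul_antiHoleAngle {β : Type*} {g : ℝ → β}
    (hg : Periodic g (2 * π)) (hodd : Odd n) : Periodic (fun x => g (x * antiHoleAngle n)) n := by
  obtain ⟨m, rfl⟩ := hodd
  intro x
  have h : (x + ((2 * m + 1 : ℕ) : ℝ)) * antiHoleAngle (2 * m + 1) =
      x * antiHoleAngle (2 * m + 1) + m * (2 * π) := by
    unfold antiHoleAngle; push_cast; field_simp; ring
  simp only [h, hg.nat_mul m _]

end Angle

section DualZ

variable {n : ℕ}

theorem antiHoleC_pos (hn : 3 ≤ n) : 0 < antiHoleC n := by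
  have := cos_pi_div_natCast_pos hn
  unfold antiHoleC
  positivity

theorem antiHoleC_lt_one (hn : 3 ≤ n) : antiHoleC n < 1 := by
  have := cos_pi_div_natCast_pos hn
  unfold antiHoleC
  rw [div_lt_one (by positivity)]
  linarith

theorem antiHoleDualZ_zero_zero : antiHoleDualZ n 0 0 = (antiHoleC n)⁻¹ := by
  simp [antiHoleDualZ, antiHoleC]

theorem antiHoleDualZ_succ_zero (q : Fin n) : antiHoleDualZ n q.succ 0 = -1 := by
  simp [antiHoleDualZ]

theorem antiHoleDualZ_zero_succ (k : Fin n) : antiHoleDualZ n 0 k.succ = -1 := by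
  simp [antiHoleDualZ]

theorem antiHoleDualZ_succ_succ (q k : Fin n) :
    antiHoleDualZ n q.succ k.succ =
      antiHoleC n + (1 - antiHoleC n) * cos (((q : ℝ) - k) * antiHoleAngle n) := by
  simp [antiHoleDualZ, antiHoleC, antiHoleAngle]

variable {x : Fin (n + 1) → ℝ}

theorem sum_succ_eq_of_vecMul_antiHoleDualZ_eq_zero (hx : x ᵥ* antiHoleDualZ n = 0) :
    ∑ q : Fin n, x q.succ = x 0 * (antiHoleC n)⁻¹ := by
  have h := congrFun hx 0
  simp only [vecMul, dotProduct, Fin.sum_univ_succ, antiHoleDualZ_zero_zero,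
    antiHoleDualZ_succ_zero, Pi.zero_apply, mul_neg_one, Finset.sum_neg_distrib] at h
  linear_combination -h

theorem cos_mul_sum_add_sin_mul_sum_eq_zero_of_vecMul_antiHoleDualZ_eq_zero (hn : 3 ≤ n)
    (hx : x ᵥ* antiHoleDualZ n = 0) (k : Fin n) :
    cos (k * antiHoleAngle n) * ∑ q : Fin n, x q.succ * cos (q * antiHoleAngle n) +
      sin (k * antiHoleAngle n) * ∑ q : Fin n, x q.succ * sin (q * antiHoleAngle n) = 0 := by
  set c := antiHoleC n
  have hcol : ∑ q : Fin n, x q.succ * antiHoleDualZ n q.succ k.succ =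
      c * ∑ q : Fin n, x q.succ + (1 - c) * (cos (k * antiHoleAngle n) *
        ∑ q : Fin n, x q.succ * cos (q * antiHoleAngle n) + sin (k * antiHoleAngle n) *
          ∑ q : Fin n, x q.succ * sin (q * antiHoleAngle n)) := by
    simp only [Finset.mul_sum, ← Finset.sum_add_distrib]
    refine Finset.sum_congr rfl fun q _ => ?_
    rw [antiHoleDualZ_succ_succ, sub_mul (q : ℝ), cos_sub]
    ring
  have h := congrFun hx k.succ
  simp only [vecMul, dotProduct, Fin.sum_univ_succ, antiHoleDualZ_zero_succ, hcol,
    sum_succ_eq_of_vecMul_antiHoleDualZ_eq_zero hx, Pi.zero_apply] at h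
  have hc : c * c⁻¹ = 1 := mul_inv_cancel₀ (antiHoleC_pos hn).ne'
  have h1c : 1 - c ≠ 0 := (sub_pos.mpr (antiHoleC_lt_one hn)).ne'
  refine (mul_eq_zero.mp ?_).resolve_left h1c
  linear_combination h - x 0 * hc

theorem sum_mul_cos_eq_zero_of_vecMul_antiHoleDualZ_eq_zero (hn : 3 ≤ n)
    (hx : x ᵥ* antiHoleDualZ n = 0) :
    ∑ q : Fin n, x q.succ * cos (q * antiHoleAngle n) = 0 := by
  simpa using cos_mul_sum_add_sin_mul_sum_eq_zero_of_vecMul_antiHoleDualZ_eq_zero hn hx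
    ⟨0, by omega⟩

theorem sum_mul_sin_eq_zero_of_vecMul_antiHoleDualZ_eq_zero (hn : 3 ≤ n)
    (hx : x ᵥ* antiHoleDualZ n = 0) :
    ∑ q : Fin n, x q.succ * sin (q * antiHoleAngle n) = 0 := by
  have h := cos_mul_sum_add_sin_mul_sum_eq_zero_of_vecMul_antiHoleDualZ_eq_zero hn hx ⟨1, by omega⟩
  simp only [sum_mul_cos_eq_zero_of_vecMul_antiHoleDualZ_eq_zero hn hx, Nat.cast_one, one_mul,
    mul_zero, zero_add] at h
  exact (mul_eq_zero.mp h).resolve_left (sin_antiHoleAngle_pos (by omega)).ne'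

end DualZ

theorem eq_of_sum_mul_cos_sin_antiHoleAngle_eq_zero {n : ℕ} [NeZero n] (hodd : Odd n)
    (hn : 3 ≤ n) {y : Fin n → ℝ} {p : Fin n} (hy : ∀ q, q ≠ p - 1 → q ≠ p → q ≠ p + 1 → y q = 0)
    (hcos : ∑ q : Fin n, y q * cos (q * antiHoleAngle n) = 0)
    (hsin : ∑ q : Fin n, y q * sin (q * antiHoleAngle n) = 0) :
    y (p - 1) = y (p + 1) ∧ y p = -(y (p - 1) + y (p + 1)) * cos (antiHoleAngle n) := by
  have hsum : ∀ f : ℝ → ℝ, Periodic f n → ∑ q : Fin n, y q * f q =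
      y (p - 1) * f (p - 1) + y p * f p + y (p + 1) * f (p + 1) := by
    intro f hf
    rw [Fintype.sum_eq_add_add (p.sub_one_ne_self (by omega)) (p.sub_one_ne_add_one hn)
      (p.add_one_ne_self (by omega)).symm fun q h₁ h₂ h₃ => by rw [hy q h₁ h₂ h₃, zero_mul],
      hf.apply_val_sub_one, hf.apply_val_add_one]
  rw [hsum _ (cos_periodic.comp_mul_antiHoleAngle hodd)] at hcos
  rw [hsum _ (sin_periodic.comp_mul_antiHoleAngle hodd)] at hsin
  simp only [sub_mul, add_mul, one_mul] at hcos hsin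
  exact eq_of_cos_sin_three_term (sin_antiHoleAngle_pos (by omega)).ne' hcos hsin

theorem apply_succ_succ_eq_zero_of_ne_of_ne_of_ne {n : ℕ} [NeZero n] {R : Type*} [Zero R]
    {M : Matrix (Fin (n + 1)) (Fin (n + 1)) R}
    (hadj : ∀ i j : Fin (n + 1), i.val ≠ 0 → j.val ≠ 0 → i ≠ j →
      ¬(i.val % n + 1 = j.val ∨ j.val % n + 1 = i.val) → M i j = 0)
    {p q : Fin n} (h₁ : q ≠ p - 1) (h₂ : q ≠ p) (h₃ : q ≠ p + 1) : M p.succ q.succ = 0 := by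
  refine hadj _ _ (by simp) (by simp) (fun h => h₂ (Fin.succ_inj.mp h).symm) ?_
  simp only [Fin.val_succ, Nat.add_right_cancel_iff, ← Fin.val_add_one_eq_mod, ← Fin.ext_iff]
  rintro (h | h)
  · exact h₃ h.symm
  · exact h₁ (eq_sub_of_add_eq h)

theorem Matrix.IsSymm.eq_zero_of_apply_succ_succ_eq_zero {n : ℕ} {R : Type*} [Zero R]
    {M : Matrix (Fin (n + 1)) (Fin (n + 1)) R} (hsymm : M.IsSymm) (h00 : M 0 0 = 0)
    (hdiag : ∀ q : Fin n, M 0 q.succ = M q.succ q.succ)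
    (hblock : ∀ p q : Fin n, M p.succ q.succ = 0) : M = 0 := by
  ext i j
  induction i using Fin.cases <;> induction j using Fin.cases
  · exact h00
  · rw [hdiag, hblock, zero_apply]
  · rw [← hsymm.apply, hdiag, hblock, zero_apply]
  · rw [hblock, zero_apply]

theorem antiHoleDualZ_nondegenerate (n : ℕ) (hodd : Odd n) (hn : 5 ≤ n)
    (M : Matrix (Fin (n + 1)) (Fin (n + 1)) ℝ)
    (hsymm : M.IsSymm)
    (h00 : M 0 0 = 0)
    (hdiag : ∀ i : Fin (n + 1), i.val ≠ 0 → M 0 i = M i i)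
    (hadj : ∀ i j : Fin (n + 1), i.val ≠ 0 → j.val ≠ 0 → i ≠ j →
      ¬(i.val % n + 1 = j.val ∨ j.val % n + 1 = i.val) → M i j = 0)
    (hMZ : M * antiHoleDualZ n = 0) :
    M = 0 := by
  have : NeZero n := ⟨by omega⟩
  have hrow (i : Fin (n + 1)) : M i ᵥ* antiHoleDualZ n = 0 := by
    rw [← mul_apply_eq_vecMul, hMZ]
    rfl
  have hband (p : Fin n) :=
    eq_of_sum_mul_cos_sin_antiHoleAngle_eq_zero hodd (by omega) (p := p)
      (fun _ => apply_succ_succ_eq_zero_of_ne_of_ne_of_ne hadj)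
      (sum_mul_cos_eq_zero_of_vecMul_antiHoleDualZ_eq_zero (by omega) (hrow p.succ))
      (sum_mul_sin_eq_zero_of_vecMul_antiHoleDualZ_eq_zero (by omega) (hrow p.succ))
  obtain ⟨e, hedge⟩ : ∃ e, ∀ p : Fin n, M p.succ (p + 1).succ = e :=
    ⟨_, Fin.apply_eq_apply_zero_of_forall_apply_add_one fun p => by
      rw [← (hband (p + 1)).1, add_sub_cancel_right]
      exact hsymm.apply _ _⟩
  have hcenter (p : Fin n) : M 0 p.succ = 2 * e * cos (π / n) := by
    rw [hdiag _ (by simp), (hband p).2, (hband p).1, hedge, cos_antiHoleAngle (by omega)]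
    ring
  have he : e = 0 := by
    have h : (n : ℝ) * (2 * e * cos (π / n)) = 0 := by
      simpa [hcenter, h00] using sum_succ_eq_of_vecMul_antiHoleDualZ_eq_zero (hrow 0)
    simpa [NeZero.ne n, (cos_pi_div_natCast_pos (n := n) (by omega)).ne'] using h
  refine hsymm.eq_zero_of_apply_succ_succ_eq_zero h00 (fun q => hdiag _ (by simp)) fun p q => ?_
  by_cases h₁ : q = p - 1
  · rw [h₁, (hband p).1, hedge, he]
  by_cases h₂ : q = p
  · rw [h₂, (hband p).2, (hband p).1, hedge, he]
    ring
  by_cases h₃ : q = p + 1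
  · rw [h₃, hedge, he]
  exact apply_succ_succ_eq_zero_of_ne_of_ne_of_ne hadj h₁ h₂ h₃
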